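/- Let a₁, …, a_m ∈ ℝ³ be constant vectors, let k₁, …, k_m ∈ ℝ, let ω : ℝ → ℝ³, and let b₁, …, b_m : ℝ → ℝ³ be differentiable functions satisfying b_j′(t) = b_j(t) × ω(t) for all t and all j. Define Φ(t) = Σ_{j=1}^m k_j (1 + a_j · b_j(t)) and e(t) = Σ_{j=1}^m k_j (a_j × b_j(t)). Then Φ is differentiable and Φ′(t) = ω(t) · e(t) for all t. -/

import Mathlib

open Matrix

/-- The cross product on `ℝ³` with the Euclidean structure. -/
noncomputable def cross3 (x y : EuclideanSpace ℝ (Fin 3)) : EuclideanSpace ℝ (Fin 3) :=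
  (WithLp.equiv 2 (Fin 3 → ℝ)).symm
    (crossProduct ((WithLp.equiv 2 (Fin 3 → ℝ)) x) ((WithLp.equiv 2 (Fin 3 → ℝ)) y))

/-! Differentiating `a · b` gives `a · (b × ω)`, and the cyclic symmetry of the triple
product rewrites this as `ω · (a × b)`; the claim follows by linearity in the `k j`. -/

theorem real_inner_cross3 (x y z : EuclideanSpace ℝ (Fin 3)) :
    (inner ℝ x (cross3 y z) : ℝ) = x.ofLp ⬝ᵥ y.ofLp ⨯₃ z.ofLp := by
  rw [EuclideanSpace.inner_eq_star_dotProduct, star_trivial, dotProduct_comm]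
  rfl

theorem real_inner_cross3_cycle (x y z : EuclideanSpace ℝ (Fin 3)) :
    (inner ℝ x (cross3 y z) : ℝ) = inner ℝ z (cross3 x y) := by
  rw [real_inner_cross3, real_inner_cross3, triple_product_permutation,
    triple_product_permutation]

theorem hasDerivAt_inner_of_hasDerivAt_cross3 (a : EuclideanSpace ℝ (Fin 3))
    {b ω : ℝ → EuclideanSpace ℝ (Fin 3)} {t : ℝ}
    (hb : HasDerivAt b (cross3 (b t) (ω t)) t) :
    HasDerivAt (fun s => (inner ℝ a (b s) : ℝ)) (inner ℝ (ω t) (cross3 a (b t))) t := by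
  rw [← real_inner_cross3_cycle]
  simpa using (hasDerivAt_const t a).inner ℝ hb

/-- If `b_j′ = b_j × ω`, then `Φ(t) = ∑ j, k j (1 + a j · b j t)` is
differentiable with `Φ′(t) = ω(t) · e(t)` where `e(t) = ∑ j, k j (a j × b j t)`. -/
theorem deriv_error_function_along_kinematics
    (m : ℕ) (a : Fin m → EuclideanSpace ℝ (Fin 3)) (k : Fin m → ℝ)
    (ω : ℝ → EuclideanSpace ℝ (Fin 3))
    (b : Fin m → ℝ → EuclideanSpace ℝ (Fin 3))
    (hb : ∀ j t, HasDerivAt (b j) (cross3 (b j t) (ω t)) t) :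
    ∀ t : ℝ, HasDerivAt (fun s => ∑ j, k j * (1 + inner ℝ (a j) (b j s) : ℝ))
      (inner ℝ (ω t) (∑ j, k j • cross3 (a j) (b j t)) : ℝ) t := by
  intro t
  simp only [inner_sum, real_inner_smul_right]
  exact HasDerivAt.fun_sum fun j _ =>
    ((hasDerivAt_inner_of_hasDerivAt_cross3 (a j) (hb j t)).const_add 1).const_mul (k j)
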